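/- arXiv:2111.03158 — 9 statements merged into one kernel-verified Lean document; each statement's English description precedes it below -/
import Mathlib

section
/- There exists a universal constant K > 0 such that the following holds (relative flatness of regular distributions). Let F : [0,1] → [0,1] be a continuous, strictly increasing function with F(0) = 0 and F(1) = 1, let F⁻¹ denote its inverse, and suppose the quantile-space revenue curve R̂(q) = q · F⁻¹(1 − q) is concave on [0,1] (i.e., the distribution with cdf F is regular). Define Rev(p) = p · (1 − F(p)). Let 0 < p₁ < p₄ ≤ 1, set c = p₄/p₁, p₂ = (2p₁ + p₄)/3, p₃ = (p₁ + 2p₄)/3, and let Rev_max and Rev_min denote the maximum and minimum of Rev over the four points {p₁, p₂, p₃, p₄}. If Rev_min ≥ Rev_max − ε for some ε > 0, then for every p ∈ [p₁, p₄] one has Rev(p) ≤ Rev_max + K · c · ε. -/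
/-!
In quantile space the revenue curve `q ↦ q · F⁻¹(1 - q)` is concave and passes through the
points `(qᵢ, pᵢ qᵢ)`, `qᵢ = 1 - F pᵢ`, whose heights lie within `ε` of each other. The identity
`pᵢ pⱼ (qᵢ - qⱼ) = pⱼ Rev pᵢ - pᵢ Rev pⱼ` shows that, when `ε` is small compared with
`Rmax (p₄ - p₁) / p₄`, consecutive quantile gaps agree up to a factor `O(c)`. Extending the
secants of the concave curve through neighbouring points then bounds the revenue in between by
`Rmax + O(c) ε`. When `ε` is large, the trivial bound `Rev p ≤ p₄ q₁ ≤ c Rmax` suffices.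
-/

open Set

theorem ConcaveOn.le_add_mul_of_mem_uIcc {s : Set ℝ} {g : ℝ → ℝ} (hg : ConcaveOn ℝ s g)
    {a b x L ε : ℝ} (ha : a ∈ s) (hx : x ∈ s) (hb : b ∈ uIcc a x) (hab : a ≠ b)
    (hrise : g b - g a ≤ ε) (hε : 0 ≤ ε) (hL : |x - b| ≤ L * |b - a|) :
    g x ≤ g b + L * ε := by
  have hba : 0 < |b - a| := abs_pos.2 (sub_ne_zero.2 hab.symm)
  have secant : |b - a| * (g x - g b) ≤ |x - b| * (g b - g a) := by
    rcases mem_uIcc.1 hb with ⟨hab', hbx⟩ | ⟨hxb, hba'⟩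
    · have hab' := lt_of_le_of_ne hab' hab
      rcases hbx.eq_or_lt with rfl | hbx
      · simp
      have h := hg.slope_anti_adjacent ha hx hab' hbx
      rw [div_le_div_iff₀ (by linarith) (by linarith)] at h
      rw [abs_of_pos (by linarith), abs_of_pos (by linarith)]
      linarith
    · have hba' := lt_of_le_of_ne hba' (Ne.symm hab)
      rcases hxb.eq_or_lt with rfl | hxb
      · simp
      have h := hg.slope_anti_adjacent hx ha hxb hba'
      rw [div_le_div_iff₀ (by linarith) (by linarith)] at h
      rw [abs_of_neg (by linarith), abs_of_neg (by linarith)]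
      linarith
  have hrise' : |x - b| * (g b - g a) ≤ |b - a| * (L * ε) := by
    calc |x - b| * (g b - g a) ≤ |x - b| * ε := mul_le_mul_of_nonneg_left hrise (abs_nonneg _)
      _ ≤ L * |b - a| * ε := mul_le_mul_of_nonneg_right hL hε
      _ = |b - a| * (L * ε) := by ring
  have := le_of_mul_le_mul_left (secant.trans hrise') hba
  linarith

theorem ConcaveOn.le_add_mul_of_flat {s : Set ℝ} {g : ℝ → ℝ} (hg : ConcaveOn ℝ s g)
    {q₁ q₂ q₃ x L ε : ℝ} (hq₁ : q₁ ∈ s) (hq₃ : q₃ ∈ s) (hx : x ∈ s) (h₂₁ : q₂ < q₁)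
    (h₃₂ : q₃ < q₂) (hg₁ : g q₂ - g q₁ ≤ ε) (hg₃ : g q₂ - g q₃ ≤ ε) (hε : 0 ≤ ε)
    (hleft : q₂ - x ≤ L * (q₁ - q₂)) (hright : x - q₂ ≤ L * (q₂ - q₃)) :
    g x ≤ g q₂ + L * ε := by
  rcases le_total x q₂ with hxq | hxq
  · refine hg.le_add_mul_of_mem_uIcc hq₁ hx (mem_uIcc.2 (Or.inr ⟨hxq, h₂₁.le⟩)) h₂₁.ne' hg₁ hε ?_
    rwa [abs_of_nonpos (by linarith), abs_of_neg (by linarith), neg_sub, neg_sub]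
  · refine hg.le_add_mul_of_mem_uIcc hq₃ hx (mem_uIcc.2 (Or.inl ⟨h₃₂.le, hxq⟩)) h₃₂.ne hg₃ hε ?_
    rwa [abs_of_nonneg (by linarith), abs_of_pos (by linarith)]

theorem price_quantile_gap_mem_Icc {a b qa qb M ε δ : ℝ} (ha : 0 ≤ a) (hab : a ≤ b)
    (hε : 0 ≤ ε) (hRa : a * qa ∈ Icc (M - ε) M) (hRb : b * qb ∈ Icc (M - ε) M)
    (hδ : 2 * ε * b ≤ δ) :
    a * b * (qa - qb) ∈ Icc (M * (b - a) - δ / 2) (M * (b - a) + δ / 2) := by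
  have hb : 0 ≤ b := ha.trans hab
  have hεa : ε * a ≤ ε * b := mul_le_mul_of_nonneg_left hab hε
  have hexp : a * b * (qa - qb) = b * (a * qa) - a * (b * qb) := by ring
  obtain ⟨hRa₁, hRa₂⟩ := hRa
  obtain ⟨hRb₁, hRb₂⟩ := hRb
  constructor
  · nlinarith [mul_le_mul_of_nonneg_left hRa₁ hb, mul_le_mul_of_nonneg_left hRb₂ ha]
  · nlinarith [mul_le_mul_of_nonneg_left hRa₂ hb, mul_le_mul_of_nonneg_left hRb₁ ha]

theorem quantile_gaps_of_flat {p₁ p₂ p₃ p₄ q₁ q₂ q₃ q₄ M ε : ℝ} (hp₁ : 0 < p₁)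
    (hp₁₄ : p₁ < p₄) (hp₂ : p₂ = (2 * p₁ + p₄) / 3) (hp₃ : p₃ = (p₁ + 2 * p₄) / 3)
    (hε : 0 < ε) (h₁ : p₁ * q₁ ∈ Icc (M - ε) M) (h₂ : p₂ * q₂ ∈ Icc (M - ε) M)
    (h₃ : p₃ * q₃ ∈ Icc (M - ε) M) (h₄ : p₄ * q₄ ∈ Icc (M - ε) M)
    (hsmall : 6 * ε * p₄ ≤ M * (p₄ - p₁)) :
    q₂ < q₁ ∧ q₃ < q₂ ∧ q₂ - q₄ ≤ 6 * (p₄ / p₁) * (q₁ - q₂) ∧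
      q₁ - q₂ ≤ 6 * (p₄ / p₁) * (q₂ - q₃) := by
  set δ := M * (p₄ - p₁) / 3 with hδ
  have hp₂₀ : 0 < p₂ := by rw [hp₂]; linarith
  have hp₃₀ : 0 < p₃ := by rw [hp₃]; linarith
  have hδ₄ : 2 * ε * p₄ ≤ δ := by linarith
  have hδ₂ : 2 * ε * p₂ ≤ δ := by nlinarith
  have hδ₃ : 2 * ε * p₃ ≤ δ := by nlinarith
  have g₁₂ := price_quantile_gap_mem_Icc hp₁.le (by linarith) hε.le h₁ h₂ hδ₂
  have g₂₃ := price_quantile_gap_mem_Icc hp₂₀.le (by linarith) hε.le h₂ h₃ hδ₃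
  have g₂₄ := price_quantile_gap_mem_Icc hp₂₀.le (by linarith) hε.le h₂ h₄ hδ₄
  rw [show M * (p₂ - p₁) = δ by rw [hp₂]; ring] at g₁₂
  rw [show M * (p₃ - p₂) = δ by rw [hp₂, hp₃]; ring] at g₂₃
  rw [show M * (p₄ - p₂) = 2 * δ by rw [hp₂]; ring] at g₂₄
  have hδ₀ : 0 < δ := by nlinarith
  have h₂₁ : q₂ < q₁ := by
    have : 0 < p₁ * p₂ * (q₁ - q₂) := by linarith [g₁₂.1]
    exact sub_pos.1 (pos_of_mul_pos_right this (by positivity))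
  have h₃₂ : q₃ < q₂ := by
    have : 0 < p₂ * p₃ * (q₂ - q₃) := by linarith [g₂₃.1]
    exact sub_pos.1 (pos_of_mul_pos_right this (by positivity))
  refine ⟨h₂₁, h₃₂, ?_, ?_⟩
  · have h : p₂ * (p₄ * (q₂ - q₄)) ≤ p₂ * (5 * p₁ * (q₁ - q₂)) := by
      linarith [g₁₂.1, g₂₄.2]
    have h' := le_of_mul_le_mul_left h hp₂₀
    have h₄₂ : 0 ≤ q₂ - q₄ := by
      have : 0 < p₂ * p₄ * (q₂ - q₄) := by linarith [g₂₄.1]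
      exact (pos_of_mul_pos_right this (by nlinarith)).le
    rw [show 6 * (p₄ / p₁) * (q₁ - q₂) = 6 * p₄ * (q₁ - q₂) / p₁ by ring, le_div_iff₀ hp₁]
    nlinarith [mul_le_mul_of_nonneg_right hp₁₄.le h₄₂,
      mul_le_mul_of_nonneg_right hp₁₄.le (sub_nonneg.2 h₂₁.le)]
  · have h : p₂ * (p₁ * (q₁ - q₂)) ≤ p₂ * (3 * p₃ * (q₂ - q₃)) := by
      linarith [g₁₂.2, g₂₃.1]
    have h' := le_of_mul_le_mul_left h hp₂₀
    rw [show 6 * (p₄ / p₁) * (q₂ - q₃) = 6 * p₄ * (q₂ - q₃) / p₁ by ring, le_div_iff₀ hp₁]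
    nlinarith

theorem revenue_le_of_eps_large {p p₁ p₄ q q₁ M ε : ℝ} (hp₁ : 0 < p₁) (hp₁₄ : p₁ ≤ p₄)
    (hp : p ≤ p₄) (hq : 0 ≤ q) (hqq₁ : q ≤ q₁) (h₁ : p₁ * q₁ ≤ M)
    (hlarge : M * (p₄ - p₁) ≤ 6 * ε * p₄) :
    p * q ≤ M + 6 * (p₄ / p₁) * ε :=
  calc p * q ≤ p₄ * q₁ := mul_le_mul hp hqq₁ hq (by linarith)
    _ = p₄ / p₁ * (p₁ * q₁) := by field_simp
    _ ≤ p₄ / p₁ * M := mul_le_mul_of_nonneg_left h₁ (div_pos (by linarith) hp₁).le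
    _ = M + M * (p₄ - p₁) / p₁ := by field_simp; ring
    _ ≤ M + 6 * ε * p₄ / p₁ := by gcongr
    _ = M + 6 * (p₄ / p₁) * ε := by ring

section QuantileRevenue

variable {s : Set ℝ} {g Q : ℝ → ℝ} {p₁ p₂ p₃ p₄ M ε : ℝ}

theorem revenue_le_of_flat_of_eps_small (hg : ConcaveOn ℝ s g)
    (hQs : MapsTo Q (Icc p₁ p₄) s) (hQ : AntitoneOn Q (Icc p₁ p₄))
    (hgQ : ∀ p ∈ Icc p₁ p₄, g (Q p) = p * Q p) (hp₁ : 0 < p₁) (hp₁₄ : p₁ < p₄)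
    (hp₂ : p₂ = (2 * p₁ + p₄) / 3) (hp₃ : p₃ = (p₁ + 2 * p₄) / 3) (hε : 0 < ε)
    (hflat : ∀ p ∈ ({p₁, p₂, p₃, p₄} : Set ℝ), p * Q p ∈ Icc (M - ε) M)
    (hsmall : 6 * ε * p₄ ≤ M * (p₄ - p₁)) {p : ℝ} (hp : p ∈ Icc p₁ p₄) :
    p * Q p ≤ M + 6 * (p₄ / p₁) * ε := by
  have mem₁ : p₁ ∈ Icc p₁ p₄ := ⟨le_rfl, hp₁₄.le⟩
  have mem₂ : p₂ ∈ Icc p₁ p₄ := ⟨by linarith, by linarith⟩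
  have mem₃ : p₃ ∈ Icc p₁ p₄ := ⟨by linarith, by linarith⟩
  have mem₄ : p₄ ∈ Icc p₁ p₄ := ⟨hp₁₄.le, le_rfl⟩
  have h₁ := hflat p₁ (by simp)
  have h₂ := hflat p₂ (by simp)
  have h₃ := hflat p₃ (by simp)
  have h₄ := hflat p₄ (by simp)
  obtain ⟨h₂₁, h₃₂, hleft, hright⟩ := quantile_gaps_of_flat hp₁ hp₁₄ hp₂ hp₃ hε h₁ h₂ h₃ h₄ hsmall
  have hQp₁ : Q p ≤ Q p₁ := hQ mem₁ hp hp.1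
  have hQp₄ : Q p₄ ≤ Q p := hQ hp mem₄ hp.2
  have key := hg.le_add_mul_of_flat (L := 6 * (p₄ / p₁)) (hQs mem₁) (hQs mem₃) (hQs hp) h₂₁ h₃₂
    (by rw [hgQ p₂ mem₂, hgQ p₁ mem₁]; linarith [h₁.1, h₂.2])
    (by rw [hgQ p₂ mem₂, hgQ p₃ mem₃]; linarith [h₃.1, h₂.2]) hε.le
    (by linarith) (by linarith)
  rw [hgQ p hp, hgQ p₂ mem₂] at key
  linarith [h₂.2]

theorem revenue_le_of_flat (hg : ConcaveOn ℝ s g) (hQs : MapsTo Q (Icc p₁ p₄) s)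
    (hQ₀ : ∀ p ∈ Icc p₁ p₄, 0 ≤ Q p) (hQ : AntitoneOn Q (Icc p₁ p₄))
    (hgQ : ∀ p ∈ Icc p₁ p₄, g (Q p) = p * Q p) (hp₁ : 0 < p₁) (hp₁₄ : p₁ < p₄)
    (hp₂ : p₂ = (2 * p₁ + p₄) / 3) (hp₃ : p₃ = (p₁ + 2 * p₄) / 3) (hε : 0 < ε)
    (hflat : ∀ p ∈ ({p₁, p₂, p₃, p₄} : Set ℝ), p * Q p ∈ Icc (M - ε) M) :
    ∀ p ∈ Icc p₁ p₄, p * Q p ≤ M + 6 * (p₄ / p₁) * ε := by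
  intro p hp
  rcases le_or_gt (6 * ε * p₄) (M * (p₄ - p₁)) with hsmall | hlarge
  · exact revenue_le_of_flat_of_eps_small hg hQs hQ hgQ hp₁ hp₁₄ hp₂ hp₃ hε hflat hsmall hp
  · exact revenue_le_of_eps_large hp₁ hp₁₄.le hp.2 (hQ₀ p hp) (hQ ⟨le_rfl, hp₁₄.le⟩ hp hp.1)
      (hflat p₁ (by simp)).2 hlarge.le

end QuantileRevenue

theorem mem_Icc_max_sub_of_min_ge {f : ℝ → ℝ} {x₁ x₂ x₃ x₄ ε : ℝ}
    (h : min (min (f x₁) (f x₂)) (min (f x₃) (f x₄)) ≥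
      max (max (f x₁) (f x₂)) (max (f x₃) (f x₄)) - ε) :
    ∀ x ∈ ({x₁, x₂, x₃, x₄} : Set ℝ), f x ∈
      Icc (max (max (f x₁) (f x₂)) (max (f x₃) (f x₄)) - ε)
        (max (max (f x₁) (f x₂)) (max (f x₃) (f x₄))) := by
  simp only [mem_insert_iff, mem_singleton_iff]
  rintro x (rfl | rfl | rfl | rfl) <;> constructor <;>
    simp only [ge_iff_le, le_max_iff, le_min_iff] at h ⊢ <;> grind

/-- Relative flatness of regular distributions: there is a universal constant `K > 0` such
that for any regular distribution (cdf `F` continuous, strictly increasing on `[0,1]` with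
`F 0 = 0`, `F 1 = 1`, inverse `Finv`, and concave quantile-space revenue curve), if the
revenue curve is `ε`-flat at four equidistant points `p₁ < p₂ < p₃ < p₄ = c·p₁`, then the
revenue anywhere in `[p₁, p₄]` is at most `Rev_max + K·c·ε`. -/
theorem relative_flatness_of_regular :
    ∃ K : ℝ, 0 < K ∧
      ∀ (F Finv : ℝ → ℝ),
        ContinuousOn F (Icc 0 1) →
        StrictMonoOn F (Icc 0 1) →
        F 0 = 0 → F 1 = 1 →
        (∀ p ∈ Icc (0:ℝ) 1, Finv (F p) = p) →
        (∀ q ∈ Icc (0:ℝ) 1, F (Finv q) = q) →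
        ConcaveOn ℝ (Icc 0 1) (fun q => q * Finv (1 - q)) →
        ∀ ε : ℝ, 0 < ε →
        ∀ p₁ p₄ : ℝ, 0 < p₁ → p₁ < p₄ → p₄ ≤ 1 →
        ∀ c p₂ p₃ : ℝ, c = p₄ / p₁ → p₂ = (2 * p₁ + p₄) / 3 → p₃ = (p₁ + 2 * p₄) / 3 →
        ∀ Rev : ℝ → ℝ, (∀ p, Rev p = p * (1 - F p)) →
        ∀ Rmax Rmin : ℝ,
          Rmax = max (max (Rev p₁) (Rev p₂)) (max (Rev p₃) (Rev p₄)) →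
          Rmin = min (min (Rev p₁) (Rev p₂)) (min (Rev p₃) (Rev p₄)) →
          Rmin ≥ Rmax - ε →
          ∀ p ∈ Icc p₁ p₄, Rev p ≤ Rmax + K * c * ε := by
  refine ⟨6, by norm_num, ?_⟩
  intro F Finv _ hF hF₀ hF₁ hFinv _ hconc ε hε p₁ p₄ hp₁ hp₁₄ hp₄ c p₂ p₃ hc hp₂ hp₃ Rev hRev
    Rmax Rmin hRmax hRmin hflat
  obtain rfl : Rev = fun p => p * (1 - F p) := funext hRev
  subst hc hRmax hRmin
  have hsub : Icc p₁ p₄ ⊆ Icc 0 1 := Icc_subset_Icc hp₁.le hp₄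
  have hQs : MapsTo (fun p => 1 - F p) (Icc p₁ p₄) (Icc 0 1) := fun p hp => by
    have h₀ := hF.monotoneOn ⟨le_rfl, zero_le_one⟩ (hsub hp) (hsub hp).1
    have h₁ := hF.monotoneOn (hsub hp) ⟨zero_le_one, le_rfl⟩ (hsub hp).2
    constructor <;> linarith
  have hQ : AntitoneOn (fun p => 1 - F p) (Icc p₁ p₄) := fun a ha b hb hab =>
    sub_le_sub_left (hF.monotoneOn (hsub ha) (hsub hb) hab) 1
  have hgQ : ∀ p ∈ Icc p₁ p₄, (1 - F p) * Finv (1 - (1 - F p)) = p * (1 - F p) := fun p hp => by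
    rw [sub_sub_cancel, hFinv p (hsub hp), mul_comm]
  exact revenue_le_of_flat hconc hQs (fun p hp => (hQs hp).1) hQ hgQ hp₁ hp₁₄ hp₂ hp₃ hε
    (mem_Icc_max_sub_of_min_ge (f := fun p => p * (1 - F p)) hflat)
end

section
/- Let 0 < ε < √2/2 and let q, q' ∈ (0,1) satisfy q'/(1+ε) ≤ q ≤ (1+ε)·q' and (1−q')/(1+ε) ≤ 1−q ≤ (1+ε)·(1−q'). Then the Kullback–Leibler divergence between the Bernoulli distributions with parameters q and q' satisfies q·log(q/q') + (1−q)·log((1−q)/(1−q')) < ε². -/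
/-!
From `log x ≤ x - 1`, the Kullback–Leibler divergence of two Bernoulli laws is at most their
χ²-divergence `(q - q')² / (q' (1 - q'))`. The multiplicative closeness bounds `|q - q'|` both by
`ε q'` and by `ε (1 - q')`, one of them strictly, so the χ²-divergence is below `ε²`.
-/

open Real

lemma mul_log_div_le {a b : ℝ} (ha : 0 ≤ a) (hb : 0 < b) :
    a * log (a / b) ≤ a ^ 2 / b - a := by
  rcases ha.eq_or_lt with rfl | ha
  · simp
  · calc a * log (a / b) ≤ a * (a / b - 1) :=
          mul_le_mul_of_nonneg_left (log_le_sub_one_of_pos (div_pos ha hb)) ha.le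
      _ = a ^ 2 / b - a := by ring

lemma bernoulli_kl_le_chiSq {q q' : ℝ} (hq : q ∈ Set.Icc (0 : ℝ) 1)
    (hq' : q' ∈ Set.Ioo (0 : ℝ) 1) :
    q * log (q / q') + (1 - q) * log ((1 - q) / (1 - q')) ≤ (q - q') ^ 2 / (q' * (1 - q')) := by
  obtain ⟨hq0, hq1⟩ := hq
  obtain ⟨hq'0, hq'1⟩ := hq'
  have hq'1 : 0 < 1 - q' := sub_pos.2 hq'1
  calc q * log (q / q') + (1 - q) * log ((1 - q) / (1 - q'))
      ≤ (q ^ 2 / q' - q) + ((1 - q) ^ 2 / (1 - q') - (1 - q)) :=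
        add_le_add (mul_log_div_le hq0 hq'0) (mul_log_div_le (sub_nonneg.2 hq1) hq'1)
    _ = (q - q') ^ 2 / (q' * (1 - q')) := by field_simp; ring

/-- The case `q ≤ q'`; the case `q' ≤ q` follows by exchanging `q, q'` with `1 - q, 1 - q'`. -/
lemma sq_sub_lt_of_le {ε q q' : ℝ} (hε : 0 < ε) (hq' : q' ∈ Set.Ioo (0 : ℝ) 1) (hle : q ≤ q')
    (h1 : q' / (1 + ε) ≤ q) (h4 : 1 - q ≤ (1 + ε) * (1 - q')) :
    (q - q') ^ 2 < ε ^ 2 * (q' * (1 - q')) := by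
  obtain ⟨hq'0, hq'1⟩ := hq'
  have hlow : q' - q < ε * q' := by
    rw [div_le_iff₀ (by linarith)] at h1
    nlinarith [mul_pos (mul_pos hε hε) hq'0]
  have hup : q' - q ≤ ε * (1 - q') := by linarith
  calc (q - q') ^ 2 = (q' - q) * (q' - q) := by ring
    _ ≤ (q' - q) * (ε * (1 - q')) := mul_le_mul_of_nonneg_left hup (sub_nonneg.2 hle)
    _ < ε * q' * (ε * (1 - q')) :=
        mul_lt_mul_of_pos_right hlow (mul_pos hε (sub_pos.2 hq'1))
    _ = ε ^ 2 * (q' * (1 - q')) := by ring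

theorem kl_bernoulli_lt_sq_general (ε q q' : ℝ)
    (hε : 0 < ε)
    (hq : q ∈ Set.Ioo (0:ℝ) 1) (hq' : q' ∈ Set.Ioo (0:ℝ) 1)
    (h1 : q' / (1 + ε) ≤ q) (h2 : q ≤ (1 + ε) * q')
    (h3 : (1 - q') / (1 + ε) ≤ 1 - q) (h4 : 1 - q ≤ (1 + ε) * (1 - q')) :
    q * Real.log (q / q') + (1 - q) * Real.log ((1 - q) / (1 - q')) < ε ^ 2 := by
  have hsq : (q - q') ^ 2 < ε ^ 2 * (q' * (1 - q')) := by
    rcases le_total q q' with hle | hle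
    · exact sq_sub_lt_of_le hε hq' hle h1 h4
    · have hq'c : 1 - q' ∈ Set.Ioo (0 : ℝ) 1 := ⟨by linarith [hq'.2], by linarith [hq'.1]⟩
      have := sq_sub_lt_of_le hε hq'c (by linarith) h3 (by rwa [sub_sub_cancel, sub_sub_cancel])
      rwa [sub_sub_cancel, sub_sub_sub_cancel_left, ← neg_sub, neg_sq, mul_comm (1 - q')] at this
  calc q * log (q / q') + (1 - q) * log ((1 - q) / (1 - q'))
      ≤ (q - q') ^ 2 / (q' * (1 - q')) := bernoulli_kl_le_chiSq (Set.Ioo_subset_Icc_self hq) hq'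
    _ < ε ^ 2 := by
        rw [div_lt_iff₀ (mul_pos hq'.1 (sub_pos.2 hq'.2))]
        exact hsq

/-- KL divergence bound for close Bernoulli parameters: if `q` and `q'` are in `(0,1)` and
are multiplicatively close (both `q` vs `q'` and `1−q` vs `1−q'` within a factor `1+ε`),
with `0 < ε < √2/2`, then `D_KL(Bern(q) ‖ Bern(q')) < ε²`. -/
theorem kl_bernoulli_lt_sq (ε q q' : ℝ)
    (hε : 0 < ε) (hε' : ε < Real.sqrt 2 / 2)
    (hq : q ∈ Set.Ioo (0:ℝ) 1) (hq' : q' ∈ Set.Ioo (0:ℝ) 1)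
    (h1 : q' / (1 + ε) ≤ q) (h2 : q ≤ (1 + ε) * q')
    (h3 : (1 - q') / (1 + ε) ≤ 1 - q) (h4 : 1 - q ≤ (1 + ε) * (1 - q')) :
    q * Real.log (q / q') + (1 - q) * Real.log ((1 - q) / (1 - q')) < ε ^ 2 :=
  kl_bernoulli_lt_sq_general ε q q' hε hq hq' h1 h2 h3 h4
end

section
/- Fix ε with 0 < ε ≤ 1/400 and set ε₀ = 16ε. With Q_D and Q_{D'} the explicit quantile functions defined in the context, there is no price p ∈ [0,1] that is simultaneously ε-optimal for both distributions; that is, there is no p ∈ [0,1] satisfying both p·Q_D(p) ≥ (0.4 + 0.4·ε₀ + 0.8·ε₀^{3/2}) − ε and p·Q_{D'}(p) ≥ 0.4 − ε. -/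
/-- Quantile function of the perturbed distribution `D` (with `ε₀ = 16ε`). -/
noncomputable def QD (ε₀ : ℝ) (v : ℝ) : ℝ :=
  if v < 1 / 2 then 1 - 0.4 * v
  else if v < 1 / 2 + Real.sqrt ε₀ / 2 then 0.8 - (1.6 - 3.2 * Real.sqrt ε₀) * (v - 1 / 2)
  else (1.6 + 3.2 * ε₀ / (1 - Real.sqrt ε₀)) * (1 - v)

/-- Quantile function of the two-piece uniform distribution `D'`. -/
noncomputable def QD' (v : ℝ) : ℝ :=
  if v < 1 / 2 then 1 - 0.4 * v else 1.6 * (1 - v)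

/-!
Below the common monopoly price `1/2` both revenue curves equal `p (1 - 0.4 p) ≤ 0.4`, which
falls short of the optimum of `D`. Above it, with `t = p - 1/2`, the revenue of `D'` is
`0.4 - 1.6 t²`, so `ε`-optimality for `D'` forces `t ≤ √(0.625 ε)`; there `D` is on its middle
piece with revenue at most `0.4 + 6.4 √ε t ≤ 0.4 + 5.06 ε`, again short of its optimum minus `ε`.
-/

open Real

lemma rpow_three_halves {x : ℝ} (hx : 0 ≤ x) : x ^ (3 / 2 : ℝ) = x * √x := by
  rw [show (3 / 2 : ℝ) = 1 + 1 / 2 by norm_num, rpow_add' hx (by norm_num), rpow_one,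
    sqrt_eq_rpow]

lemma sqrt_sixteen_mul (ε : ℝ) : √(16 * ε) = 4 * √ε := by
  rw [sqrt_mul (by norm_num), show (16 : ℝ) = 4 ^ 2 by norm_num, sqrt_sq (by norm_num)]

lemma optimal_revenue_D_eq {ε : ℝ} (hε : 0 ≤ ε) :
    0.4 + 0.4 * (16 * ε) + 0.8 * (16 * ε) ^ ((3 : ℝ) / 2) = 0.4 + 6.4 * ε + 51.2 * ε * √ε := by
  rw [rpow_three_halves (by positivity), sqrt_sixteen_mul]
  ring

lemma mul_QD_le_of_lt_half (ε₀ : ℝ) {p : ℝ} (hp : p < 1 / 2) : p * QD ε₀ p ≤ 0.4 := by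
  rw [QD, if_pos hp]
  nlinarith [mul_nonneg (by linarith : (0 : ℝ) ≤ 1 / 2 - p) (by linarith : (0 : ℝ) ≤ 2 - p)]

lemma mul_QD'_of_half_le {p : ℝ} (hp : 1 / 2 ≤ p) : p * QD' p = 0.4 - 1.6 * (p - 1 / 2) ^ 2 := by
  rw [QD', if_neg hp.not_gt]
  ring

lemma mul_QD_le_of_mem_Ico {ε₀ p : ℝ} (hε₀ : √ε₀ ≤ 1 / 2)
    (hp : p ∈ Set.Ico (1 / 2) (1 / 2 + √ε₀ / 2)) :
    p * QD ε₀ p ≤ 0.4 + 1.6 * √ε₀ * (p - 1 / 2) := by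
  rw [QD, if_neg hp.1.not_gt, if_pos hp.2]
  have hcurv : 0 ≤ (1.6 - 3.2 * √ε₀) * (p - 1 / 2) ^ 2 :=
    mul_nonneg (by linarith) (sq_nonneg _)
  nlinarith

lemma mul_QD_lt_of_sq_sub_half_le {ε p : ℝ} (hε : 0 < ε) (hε' : ε ≤ 1 / 64) (hp : 1 / 2 ≤ p)
    (ht : (p - 1 / 2) ^ 2 ≤ 0.625 * ε) : p * QD (16 * ε) p < 0.4 + 5.4 * ε := by
  have hs : 0 < √ε := sqrt_pos.mpr hε
  have hs2 : √ε ^ 2 = ε := sq_sqrt hε.le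
  -- `5.4 / 6.4 = 0.84375` and `0.625 < 0.84375 ^ 2`
  have htlt : p - 1 / 2 < 0.84375 * √ε :=
    lt_of_pow_lt_pow_left₀ 2 (by positivity) (by nlinarith)
  have hsle : √ε ≤ 1 / 8 := by nlinarith
  have hmem : p ∈ Set.Ico (1 / 2) (1 / 2 + √(16 * ε) / 2) := by
    rw [sqrt_sixteen_mul]
    exact ⟨hp, by linarith⟩
  calc p * QD (16 * ε) p ≤ 0.4 + 1.6 * √(16 * ε) * (p - 1 / 2) :=
        mul_QD_le_of_mem_Ico (by rw [sqrt_sixteen_mul]; linarith) hmem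
    _ = 0.4 + 6.4 * (√ε * (p - 1 / 2)) := by rw [sqrt_sixteen_mul]; ring
    _ < 0.4 + 6.4 * (√ε * (0.84375 * √ε)) := by gcongr
    _ = 0.4 + 5.4 * ε := by linear_combination 5.4 * hs2

/-- No price is simultaneously `ε`-optimal for both `D` and `D'`: there is no
`p ∈ [0,1]` with `p·Q_D(p) ≥ (0.4 + 0.4ε₀ + 0.8ε₀^{3/2}) − ε` and
`p·Q_{D'}(p) ≥ 0.4 − ε`. -/
theorem no_common_eps_optimal_price (ε : ℝ) (hε : 0 < ε) (hε' : ε ≤ 1 / 400) :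
    ¬ ∃ p ∈ Set.Icc (0:ℝ) 1,
        p * QD (16 * ε) p ≥ (0.4 + 0.4 * (16 * ε) + 0.8 * (16 * ε) ^ ((3:ℝ)/2)) - ε ∧
        p * QD' p ≥ 0.4 - ε := by
  rintro ⟨p, -, hD, hD'⟩
  rw [optimal_revenue_D_eq hε.le] at hD
  have hcube : 0 ≤ 51.2 * ε * √ε := by positivity
  rcases lt_or_ge p (1 / 2) with hp | hp
  · linarith [mul_QD_le_of_lt_half (16 * ε) hp]
  · rw [mul_QD'_of_half_le hp] at hD'
    have ht : (p - 1 / 2) ^ 2 ≤ 0.625 * ε := by linarith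
    linarith [mul_QD_lt_of_sq_sub_half_le hε (by linarith) hp ht]
end

section
/- Fix ε with 0 < ε ≤ 1/400 and set ε₀ = 16ε. With Q_D the explicit quantile function defined in the context, the monopoly price of D is p* = 1/2 + √ε₀/2: the function p ↦ p·Q_D(p) attains its maximum over [0,1] at p*, and the optimal revenue equals p*·Q_D(p*) = 0.4 + 0.4·ε₀ + 0.8·ε₀^{3/2}. -/
section

variable {s p : ℝ}

lemma QD_sq_of_lt_half (hp : p < 1 / 2) : QD (s ^ 2) p = 1 - 0.4 * p := by
  rw [QD, if_pos hp]

lemma QD_sq_of_mem_Ico (hs : 0 ≤ s) (hp : p ∈ Set.Ico (1 / 2) (1 / 2 + s / 2)) :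
    QD (s ^ 2) p = 0.8 - (1.6 - 3.2 * s) * (p - 1 / 2) := by
  rw [QD, Real.sqrt_sq hs, if_neg hp.1.not_gt, if_pos hp.2]

lemma QD_sq_of_le (hs : 0 ≤ s) (hp : 1 / 2 + s / 2 ≤ p) :
    QD (s ^ 2) p = (1.6 + 3.2 * s ^ 2 / (1 - s)) * (1 - p) := by
  rw [QD, Real.sqrt_sq hs, if_neg (by linarith), if_neg hp.not_gt]

lemma revenue_sq_monopolyPrice (hs : 0 ≤ s) (hs1 : s ≠ 1) :
    (1 / 2 + s / 2) * QD (s ^ 2) (1 / 2 + s / 2) = 0.4 + 0.4 * s ^ 2 + 0.8 * s ^ 3 := by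
  rw [QD_sq_of_le hs le_rfl]
  have : 1 - s ≠ 0 := sub_ne_zero.mpr hs1.symm
  field_simp
  ring

lemma revenue_sq_le_of_lt_half (hs : 0 ≤ s) (hp : p < 1 / 2) :
    p * QD (s ^ 2) p ≤ 0.4 + 0.4 * s ^ 2 + 0.8 * s ^ 3 := by
  rw [QD_sq_of_lt_half hp]
  nlinarith [mul_pos (by linarith : (0 : ℝ) < 1 / 2 - p) (by linarith : (0 : ℝ) < 2 - p),
    pow_nonneg hs 2, pow_nonneg hs 3]

lemma revenue_sq_le_of_mem_Ico (hs : 0 ≤ s) (hs2 : s ≤ 1 / 2)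
    (hp : p ∈ Set.Ico (1 / 2) (1 / 2 + s / 2)) :
    p * QD (s ^ 2) p ≤ 0.4 + 0.4 * s ^ 2 + 0.8 * s ^ 3 := by
  rw [QD_sq_of_mem_Ico hs hp]
  obtain ⟨-, hp⟩ := hp
  -- with `p* = 1/2 + s/2`, the revenue gap is exactly `(p* - p)(3.2 s² + (1.6 - 3.2 s)(p* - p))`
  have hgap : 0 ≤ 3.2 * s ^ 2 + (1.6 - 3.2 * s) * (1 / 2 + s / 2 - p) := by
    nlinarith [pow_nonneg hs 2]
  nlinarith [mul_nonneg (by linarith : (0 : ℝ) ≤ 1 / 2 + s / 2 - p) hgap]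

lemma revenue_sq_le_of_le (hs : 0 ≤ s) (hs1 : s < 1) (hp : 1 / 2 + s / 2 ≤ p) :
    p * QD (s ^ 2) p ≤ 0.4 + 0.4 * s ^ 2 + 0.8 * s ^ 3 := by
  have hK : 0 ≤ 1.6 + 3.2 * s ^ 2 / (1 - s) := by
    have := div_nonneg (by positivity : (0 : ℝ) ≤ 3.2 * s ^ 2) (sub_pos.mpr hs1).le
    linarith
  have hdecr : p * (1 - p) ≤ (1 / 2 + s / 2) * (1 - (1 / 2 + s / 2)) := by nlinarith
  rw [← revenue_sq_monopolyPrice hs hs1.ne, QD_sq_of_le hs hp, QD_sq_of_le hs le_rfl]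
  calc p * ((1.6 + 3.2 * s ^ 2 / (1 - s)) * (1 - p))
      = (1.6 + 3.2 * s ^ 2 / (1 - s)) * (p * (1 - p)) := by ring
    _ ≤ (1.6 + 3.2 * s ^ 2 / (1 - s)) * ((1 / 2 + s / 2) * (1 - (1 / 2 + s / 2))) := by gcongr
    _ = (1 / 2 + s / 2) * ((1.6 + 3.2 * s ^ 2 / (1 - s)) * (1 - (1 / 2 + s / 2))) := by ring

theorem revenue_sq_le_revenue_monopolyPrice (hs : 0 ≤ s) (hs2 : s ≤ 1 / 2) (p : ℝ) :
    p * QD (s ^ 2) p ≤ (1 / 2 + s / 2) * QD (s ^ 2) (1 / 2 + s / 2) := by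
  rw [revenue_sq_monopolyPrice hs (by linarith)]
  rcases lt_or_ge p (1 / 2) with hp | hp
  · exact revenue_sq_le_of_lt_half hs hp
  rcases lt_or_ge p (1 / 2 + s / 2) with hp' | hp'
  · exact revenue_sq_le_of_mem_Ico hs hs2 ⟨hp, hp'⟩
  · exact revenue_sq_le_of_le hs (by linarith) hp'

end

lemma Real.sq_rpow_three_halves {s : ℝ} (hs : 0 ≤ s) : (s ^ 2) ^ ((3 : ℝ) / 2) = s ^ 3 := by
  rw [← Real.rpow_natCast_mul hs]
  norm_num

/-- The monopoly price of `D` is `p* = 1/2 + √ε₀/2`: the revenue `p·Q_D(p)` is maximized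
over `[0,1]` at `p*`, with optimal revenue `0.4 + 0.4ε₀ + 0.8ε₀^{3/2}`. -/
theorem monopoly_price_of_D (ε : ℝ) (hε : 0 < ε) (hε' : ε ≤ 1 / 400) :
    (∀ p ∈ Set.Icc (0:ℝ) 1,
        p * QD (16 * ε) p ≤
          (1 / 2 + Real.sqrt (16 * ε) / 2) * QD (16 * ε) (1 / 2 + Real.sqrt (16 * ε) / 2)) ∧
    (1 / 2 + Real.sqrt (16 * ε) / 2) * QD (16 * ε) (1 / 2 + Real.sqrt (16 * ε) / 2) =
      0.4 + 0.4 * (16 * ε) + 0.8 * (16 * ε) ^ ((3:ℝ)/2) := by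
  set s := Real.sqrt (16 * ε)
  have hs : 0 ≤ s := Real.sqrt_nonneg _
  have hs_sq : 16 * ε = s ^ 2 := (Real.sq_sqrt (by positivity)).symm
  have hs_le : s ≤ 1 / 2 := by nlinarith
  rw [hs_sq, Real.sq_rpow_three_halves hs]
  exact ⟨fun p _ ↦ revenue_sq_le_revenue_monopolyPrice hs hs_le p,
    revenue_sq_monopolyPrice hs (by linarith)⟩
end

section
/- Fix ε with 0 < ε ≤ 1/400 and set ε₀ = 16ε. With Q_D and Q_{D'} the explicit quantile functions defined in the context, for every v ∈ [0,1]: (i) Q_{D'}(v) ≤ Q_D(v) ≤ (1 + 2·ε₀/(1 − √ε₀))·Q_{D'}(v), and (ii) the cdfs F_D = 1 − Q_D and F_{D'} = 1 − Q_{D'} satisfy (1 − 1.6·ε₀/(0.2 + 0.8·√ε₀))·F_{D'}(v) ≤ F_D(v) ≤ F_{D'}(v). -/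
open Real

theorem sqrt_lt_one_of_lt_one {x : ℝ} (h : x < 1) : √x < 1 :=
  (sqrt_lt' one_pos).2 (by rwa [one_pow])

variable {ε₀ v : ℝ}

theorem QD'_le_QD (h₀ : 0 ≤ ε₀) (h₁ : ε₀ < 1) (hv : v ≤ 1) : QD' v ≤ QD ε₀ v := by
  have hs₀ : 0 ≤ √ε₀ := sqrt_nonneg ε₀
  have hs₁ : √ε₀ < 1 := sqrt_lt_one_of_lt_one h₁
  have hk : 0 ≤ 3.2 * ε₀ / (1 - √ε₀) := by positivity
  unfold QD QD'
  split_ifs <;> nlinarith [mul_nonneg hk (sub_nonneg.2 hv)]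

theorem QD_le_one_add_mul_QD' (h₀ : 0 ≤ ε₀) (h₁ : ε₀ < 1) :
    QD ε₀ v ≤ (1 + 2 * ε₀ / (1 - √ε₀)) * QD' v := by
  have hs₀ : 0 ≤ √ε₀ := sqrt_nonneg ε₀
  have hs₁ : √ε₀ < 1 := sqrt_lt_one_of_lt_one h₁
  have hs : √ε₀ ^ 2 = ε₀ := sq_sqrt h₀
  unfold QD QD'
  set k := 2 * ε₀ / (1 - √ε₀)
  have hk₀ : 0 ≤ k := by positivity
  have hk : k * (1 - √ε₀) = 2 * ε₀ := div_mul_cancel₀ _ (by linarith)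
  split_ifs with hv hv'
  · nlinarith
  · nlinarith [mul_nonneg hs₀ (by linarith : 0 ≤ 1 / 2 + √ε₀ / 2 - v),
      mul_nonneg hk₀ (by linarith : 0 ≤ 1 / 2 + √ε₀ / 2 - v)]
  · have : 3.2 * ε₀ / (1 - √ε₀) = 1.6 * k := by ring
    rw [this]
    linarith

theorem mul_one_sub_QD'_le_one_sub_QD (h₀ : 0 ≤ ε₀) (h₁ : ε₀ < 1) (hv : 0 ≤ v) :
    (1 - 1.6 * ε₀ / (0.2 + 0.8 * √ε₀)) * (1 - QD' v) ≤ 1 - QD ε₀ v := by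
  have hs₀ : 0 ≤ √ε₀ := sqrt_nonneg ε₀
  have hs₁ : √ε₀ < 1 := sqrt_lt_one_of_lt_one h₁
  have hs : √ε₀ ^ 2 = ε₀ := sq_sqrt h₀
  unfold QD QD'
  set c := 1.6 * ε₀ / (0.2 + 0.8 * √ε₀)
  have hc₀ : 0 ≤ c := by positivity
  have hc : c * (0.2 + 0.8 * √ε₀) = 1.6 * ε₀ := div_mul_cancel₀ _ (by positivity)
  set a := 3.2 * ε₀ / (1 - √ε₀)
  have ha₀ : 0 ≤ a := by positivity
  have ha : a * (1 - √ε₀) = 3.2 * ε₀ := div_mul_cancel₀ _ (by linarith)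
  split_ifs with hv hv'
  · nlinarith
  · nlinarith [mul_nonneg hs₀ (by linarith : 0 ≤ 1 / 2 + √ε₀ / 2 - v),
      mul_nonneg hc₀ (by linarith : 0 ≤ 1 / 2 + √ε₀ / 2 - v)]
  · nlinarith [mul_nonneg hc₀ (by linarith : 0 ≤ v - (1 / 2 + √ε₀ / 2)),
      mul_nonneg ha₀ (by linarith : 0 ≤ v - (1 / 2 + √ε₀ / 2))]

/-- The quantiles and cdfs of `D` and `D'` are multiplicatively close: for all `v ∈ [0,1]`,
`Q_{D'}(v) ≤ Q_D(v) ≤ (1 + 2ε₀/(1−√ε₀))·Q_{D'}(v)` and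
`(1 − 1.6ε₀/(0.2 + 0.8√ε₀))·F_{D'}(v) ≤ F_D(v) ≤ F_{D'}(v)`, where `F = 1 − Q`. -/
theorem quantiles_of_D_D'_close (ε : ℝ) (hε : 0 < ε) (hε' : ε ≤ 1 / 400) :
    ∀ v ∈ Set.Icc (0:ℝ) 1,
      QD' v ≤ QD (16 * ε) v ∧
      QD (16 * ε) v ≤ (1 + 2 * (16 * ε) / (1 - Real.sqrt (16 * ε))) * QD' v ∧
      (1 - 1.6 * (16 * ε) / (0.2 + 0.8 * Real.sqrt (16 * ε))) * (1 - QD' v) ≤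
        1 - QD (16 * ε) v ∧
      1 - QD (16 * ε) v ≤ 1 - QD' v := by
  intro v ⟨hv₀, hv₁⟩
  have h₀ : 0 ≤ 16 * ε := by positivity
  have h₁ : 16 * ε < 1 := by linarith
  have hQ := QD'_le_QD h₀ h₁ hv₁
  exact ⟨hQ, QD_le_one_add_mul_QD' h₀ h₁, mul_one_sub_QD'_le_one_sub_QD h₀ h₁ hv₀,
    sub_le_sub_left hQ 1⟩
end

section
/- Fix ε with 0 < ε ≤ 1/400 and set ε₀ = 16ε. Define the density f_D : [0,1) → ℝ by f_D(v) = 0.4 for v ∈ [0, 1/2); f_D(v) = 1.6 − 3.2·√ε₀ for v ∈ [1/2, 1/2 + √ε₀/2); and f_D(v) = 1.6 + 3.2·ε₀/(1 − √ε₀) for v ∈ [1/2 + √ε₀/2, 1), and let Q_D be the corresponding quantile function as defined in the context. Then the distribution D has monotone hazard rate: the hazard rate h(v) = f_D(v)/Q_D(v) is nondecreasing on [0,1). -/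
/-- Density of the distribution `D` (with `ε₀ = 16ε`). -/
noncomputable def fD (ε₀ : ℝ) (v : ℝ) : ℝ :=
  if v < 1 / 2 then 0.4
  else if v < 1 / 2 + Real.sqrt ε₀ / 2 then 1.6 - 3.2 * Real.sqrt ε₀
  else 1.6 + 3.2 * ε₀ / (1 - Real.sqrt ε₀)

theorem MonotoneOn.div_of_antitoneOn {α β : Type*} [Preorder α] [Semifield β] [LinearOrder β]
    [IsStrictOrderedRing β] {f g : α → β} {s : Set α} (hf : MonotoneOn f s)
    (hg : AntitoneOn g s) (hf₀ : ∀ x ∈ s, 0 ≤ f x) (hg₀ : ∀ x ∈ s, 0 < g x) :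
    MonotoneOn (fun x => f x / g x) s := fun _ hx _ hy hxy =>
  div_le_div₀ (hf₀ _ hy) (hf hx hy hxy) (hg₀ _ hy) (hg hx hy hxy)

theorem Antitone.ite_lt {α β : Type*} [LinearOrder α] [Preorder β] {g h : α → β} {a : α}
    (hg : Antitone g) (hh : Antitone h) (hga : h a ≤ g a) :
    Antitone fun v => if v < a then g v else h v := by
  intro x y hxy
  dsimp only
  split_ifs with hy hx hx
  · exact hg hxy
  · exact absurd (hxy.trans_lt hy) hx
  · exact (hh (not_lt.mp hy)).trans (hga.trans (hg hx.le))
  · exact hh hxy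

theorem monotone_ite_lt_ite_lt {α β : Type*} [LinearOrder α] [Preorder β] {a b : α}
    {c₁ c₂ c₃ : β} (h₁₂ : c₁ ≤ c₂) (h₂₃ : c₂ ≤ c₃) :
    Monotone fun v => if v < a then c₁ else if v < b then c₂ else c₃ := by
  intro x y hxy
  dsimp only
  split_ifs <;> order

section

variable {ε₀ : ℝ}

theorem le_add_mul_div_one_sub_sqrt (a b : ℝ) (hb : 0 ≤ b) (h₀ : 0 ≤ ε₀)
    (h₁ : ε₀ ≤ 1) :
    a ≤ a + b * ε₀ / (1 - √ε₀) :=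
  le_add_of_nonneg_right <| div_nonneg (mul_nonneg hb h₀) (sub_nonneg.2 (Real.sqrt_le_one.2 h₁))

theorem monotone_fD (h₀ : 0 ≤ ε₀) (h₁ : ε₀ ≤ 9 / 64) : Monotone (fD ε₀) := by
  have hs : √ε₀ ≤ 3 / 8 := Real.sqrt_le_iff.mpr ⟨by norm_num, by linarith⟩
  refine monotone_ite_lt_ite_lt (by linarith) ?_
  linarith [Real.sqrt_nonneg ε₀,
    le_add_mul_div_one_sub_sqrt 1.6 3.2 (by norm_num) h₀ (by linarith)]

theorem fD_nonneg (h₀ : 0 ≤ ε₀) (h₁ : ε₀ ≤ 1 / 4) (v : ℝ) : 0 ≤ fD ε₀ v := by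
  have hs : √ε₀ ≤ 1 / 2 := Real.sqrt_le_iff.mpr ⟨by norm_num, by linarith⟩
  unfold fD
  split_ifs
  · norm_num
  · linarith
  · linarith [le_add_mul_div_one_sub_sqrt 1.6 3.2 (by norm_num) h₀ (by linarith)]

theorem antitone_QD (h₀ : 0 ≤ ε₀) (h₁ : ε₀ ≤ 1 / 4) : Antitone (QD ε₀) := by
  have hs : √ε₀ ≤ 1 / 2 := Real.sqrt_le_iff.mpr ⟨by norm_num, by linarith⟩
  have hs₀ := Real.sqrt_nonneg ε₀
  have hsq : √ε₀ ^ 2 = ε₀ := Real.sq_sqrt h₀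
  have hc := le_add_mul_div_one_sub_sqrt 1.6 3.2 (by norm_num) h₀ (by linarith)
  unfold QD
  set s := √ε₀
  set c := 1.6 + 3.2 * ε₀ / (1 - s)
  have hcs : c * (1 - s) = 1.6 * (1 - s) + 3.2 * ε₀ := by
    rw [add_mul, div_mul_cancel₀ _ (by linarith)]
  refine Antitone.ite_lt (fun x y hxy => by linarith) (Antitone.ite_lt ?_ ?_ ?_) ?_
  · exact fun x y hxy => sub_le_sub_left (mul_le_mul_of_nonneg_left (by linarith) (by linarith)) _
  · exact fun x y hxy => mul_le_mul_of_nonneg_left (by linarith) (by linarith)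
  · -- both affine pieces equal `0.8 - 0.8 * s + 1.6 * s ^ 2` at the breakpoint
    exact le_of_eq (by linear_combination hcs / 2 - 1.6 * hsq)
  · split_ifs
    · norm_num
    · have hs0 : s = 0 := by linarith
      rw [hs0] at hcs hsq
      linarith

theorem QD_pos (h₀ : 0 ≤ ε₀) (h₁ : ε₀ ≤ 1 / 4) {v : ℝ} (hv : v < 1) :
    0 < QD ε₀ v := by
  have hs : √ε₀ ≤ 1 / 2 := Real.sqrt_le_iff.mpr ⟨by norm_num, by linarith⟩
  have hs₀ := Real.sqrt_nonneg ε₀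
  have hc := le_add_mul_div_one_sub_sqrt 1.6 3.2 (by norm_num) h₀ (by linarith)
  unfold QD
  split_ifs
  · linarith
  · nlinarith
  · exact mul_pos (by linarith) (by linarith)

end

/-- The distribution `D` has monotone hazard rate: `v ↦ f_D(v)/Q_D(v)` is
nondecreasing on `[0,1)`. -/
theorem D_is_MHR (ε : ℝ) (hε : 0 < ε) (hε' : ε ≤ 1 / 400) :
    MonotoneOn (fun v => fD (16 * ε) v / QD (16 * ε) v) (Set.Ico (0:ℝ) 1) := by
  have h₀ : 0 ≤ 16 * ε := by positivity
  refine (monotone_fD h₀ (by linarith)).monotoneOn _ |>.div_of_antitoneOn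
    ((antitone_QD h₀ (by linarith)).antitoneOn _) (fun v _ => fD_nonneg h₀ (by linarith) v)
    (fun v hv => QD_pos h₀ (by linarith) hv.2)
end

section
/- Let F, G : ℝ → [0,1] be nondecreasing functions (cdfs) and let ε > 0. Suppose F(v) ≤ G(v + ε) + ε for all v ∈ ℝ (one half of the condition that F and G are within Levy distance ε). Then for every p ∈ [ε, 1]: (p − ε)·(1 − F(p − ε)) ≥ p·(1 − G(p)) − 2ε. In particular, if two distributions on [0,1] are within Levy distance ε and p is the monopoly price of the second, then posting p − ε against the first loses at most 2ε revenue relative to the optimal revenue of the second. -/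
/-! Lowering the price by `ε` absorbs the horizontal part of the Levy perturbation, so the sale
probability drops by at most `ε` (the vertical part); that costs at most `ε` revenue at a price
`≤ 1`, and the price cut itself costs at most `ε` more. -/

theorem sub_two_mul_le_sub_mul_one_sub {f g ε p : ℝ} (hε : 0 ≤ ε) (hεp : ε ≤ p) (hp : p ≤ 1)
    (hg : 0 ≤ g) (hfg : f ≤ g + ε) : p * (1 - g) - 2 * ε ≤ (p - ε) * (1 - f) :=
  calc p * (1 - g) - 2 * ε ≤ (p - ε) * (1 - (g + ε)) := by
        nlinarith [mul_nonneg hε hg, mul_nonneg hε (by linarith : 0 ≤ 1 - p + ε)]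
    _ ≤ (p - ε) * (1 - f) := mul_le_mul_of_nonneg_left (by linarith) (sub_nonneg.2 hεp)

theorem levy_close_revenue_general (F G : ℝ → ℝ) (ε : ℝ) (hε : 0 < ε)
    (hGrange : ∀ v, G v ∈ Set.Icc (0:ℝ) 1)
    (hlevy : ∀ v : ℝ, F v ≤ G (v + ε) + ε) :
    ∀ p ∈ Set.Icc ε 1, (p - ε) * (1 - F (p - ε)) ≥ p * (1 - G p) - 2 * ε := by
  rintro p ⟨hεp, hp⟩
  have hshift : F (p - ε) ≤ G p + ε := by simpa using hlevy (p - ε)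
  exact sub_two_mul_le_sub_mul_one_sub hε.le hεp hp (hGrange p).1 hshift

/-- If cdfs `F, G : ℝ → [0,1]` satisfy one half of the Levy-distance-`ε` condition,
namely `F(v) ≤ G(v + ε) + ε` for all `v`, then for every `p ∈ [ε, 1]`,
`(p − ε)·(1 − F(p − ε)) ≥ p·(1 − G(p)) − 2ε`: posting `p − ε` against `F` loses at
most `2ε` revenue relative to posting `p` against `G`. -/
theorem levy_close_revenue (F G : ℝ → ℝ) (ε : ℝ) (hε : 0 < ε)
    (hFmono : Monotone F) (hGmono : Monotone G)
    (hFrange : ∀ v, F v ∈ Set.Icc (0:ℝ) 1)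
    (hGrange : ∀ v, G v ∈ Set.Icc (0:ℝ) 1)
    (hlevy : ∀ v : ℝ, F v ≤ G (v + ε) + ε) :
    ∀ p ∈ Set.Icc ε 1, (p - ε) * (1 - F (p - ε)) ≥ p * (1 - G p) - 2 * ε :=
  levy_close_revenue_general F G ε hε hGrange hlevy
end

section
/- For every ε > 0 and every q ∈ (0, 1/2]: q·log(1+ε) + (1−q)·log(1−q) − (1−q)·log(1 − q/(1+ε)) < ε². Equivalently, the KL divergence between a Bernoulli with parameter q and a Bernoulli with parameter q/(1+ε) is less than ε² whenever q ≤ 1/2. -/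
/-!
Bounding each logarithm by `log x ≤ x - 1` bounds the Bernoulli KL divergence by the χ²
divergence `(p - r)² / (r (1 - r))`. For `r = q / (1 + ε)` this equals `q ε² / (1 + ε - q)`,
which is less than `ε²` exactly when `2q < 1 + ε`.
-/

open Real

noncomputable section

namespace Bernoulli

def klDiv (p r : ℝ) : ℝ := p * log (p / r) + (1 - p) * log ((1 - p) / (1 - r))

def chiSqDiv (p r : ℝ) : ℝ := (p - r) ^ 2 / (r * (1 - r))

lemma mul_log_div_le {p r : ℝ} (hp : 0 ≤ p) (hr : 0 < r) :
    p * log (p / r) ≤ p * (p / r - 1) := by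
  rcases hp.eq_or_lt with rfl | hp
  · simp
  · exact mul_le_mul_of_nonneg_left (log_le_sub_one_of_pos (div_pos hp hr)) hp.le

theorem klDiv_le_chiSqDiv {p r : ℝ} (hp₀ : 0 ≤ p) (hp₁ : p ≤ 1) (hr₀ : 0 < r) (hr₁ : r < 1) :
    klDiv p r ≤ chiSqDiv p r := by
  have h₀ := mul_log_div_le hp₀ hr₀
  have h₁ := mul_log_div_le (sub_nonneg.2 hp₁) (sub_pos.2 hr₁)
  have h_sum : p * (p / r - 1) + (1 - p) * ((1 - p) / (1 - r) - 1) = chiSqDiv p r := by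
    unfold chiSqDiv
    field_simp [(sub_pos.2 hr₁).ne']
    ring
  unfold klDiv
  linarith

lemma klDiv_div_one_add {q ε : ℝ} (hq₀ : 0 < q) (hq₁ : q < 1) (hε : 0 < ε) :
    klDiv q (q / (1 + ε)) =
      q * log (1 + ε) + (1 - q) * log (1 - q) - (1 - q) * log (1 - q / (1 + ε)) := by
  have hr₁ : q / (1 + ε) < 1 := (div_lt_one (by linarith)).2 (by linarith)
  rw [klDiv, div_div_cancel₀ hq₀.ne', log_div (by linarith) (by linarith)]
  ring

lemma chiSqDiv_div_one_add {q ε : ℝ} (hq : q ≠ 0) (hε : 1 + ε ≠ 0) (hqε : 1 + ε - q ≠ 0) :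
    chiSqDiv q (q / (1 + ε)) = q * ε ^ 2 / (1 + ε - q) := by
  unfold chiSqDiv
  field_simp
  ring

end Bernoulli

end

open Bernoulli in
/-- KL divergence between `Bernoulli(q)` and `Bernoulli(q/(1+ε))` is less than `ε²`
whenever `0 < q ≤ 1/2` and `ε > 0`. -/
theorem kl_bernoulli_div_case (ε q : ℝ) (hε : 0 < ε) (hq : 0 < q) (hq' : q ≤ 1 / 2) :
    q * Real.log (1 + ε) + (1 - q) * Real.log (1 - q) -
      (1 - q) * Real.log (1 - q / (1 + ε)) < ε ^ 2 := by
  have hr₀ : 0 < q / (1 + ε) := by positivity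
  have hr₁ : q / (1 + ε) < 1 := (div_lt_one (by linarith)).2 (by linarith)
  calc _ = klDiv q (q / (1 + ε)) := (klDiv_div_one_add hq (by linarith) hε).symm
    _ ≤ chiSqDiv q (q / (1 + ε)) := klDiv_le_chiSqDiv hq.le (by linarith) hr₀ hr₁
    _ = q * ε ^ 2 / (1 + ε - q) := chiSqDiv_div_one_add hq.ne' (by linarith) (by linarith)
    _ < ε ^ 2 := by
      rw [div_lt_iff₀ (by linarith)]
      nlinarith [mul_pos (pow_pos hε 2) (show 0 < 1 + ε - 2 * q by linarith)]
end

section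
/- For every ε with 0 < ε < √2/2 and every q ∈ (0, 1/2]: −q·log(1+ε) + (1−q)·log(1−q) − (1−q)·log(1 − (1+ε)·q) < ε². Equivalently, the KL divergence between a Bernoulli with parameter q and a Bernoulli with parameter (1+ε)·q is less than ε² whenever q ≤ 1/2 and ε < √2/2. -/
/-!
The gap `ε² - KL` equals `klSlack q ε - klSlack q 0`. The derivative of `klSlack q` at `t ≥ 0`
has the sign of `2 (1 + t) (1 - (1 + t) q) - q`, which decreases in `q` and equals `1/2 - t²`
at `q = 1/2`; so `klSlack q` is strictly increasing on `[0, ε]` once `ε² < 1/2`.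
-/

open Real Set

noncomputable def klSlack (q t : ℝ) : ℝ :=
  t ^ 2 + q * log (1 + t) + (1 - q) * log (1 - (1 + t) * q)

lemma klSlack_zero (q : ℝ) : klSlack q 0 = (1 - q) * log (1 - q) := by
  simp [klSlack]

lemma hasDerivAt_klSlack {q t : ℝ} (ht : 0 < 1 + t) (hqt : 0 < 1 - (1 + t) * q) :
    HasDerivAt (klSlack q)
      (t * (2 * (1 + t) * (1 - (1 + t) * q) - q) / ((1 + t) * (1 - (1 + t) * q))) t := by
  have hlog₁ : HasDerivAt (fun t => log (1 + t)) (1 / (1 + t)) t := by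
    simpa using ((hasDerivAt_id t).const_add 1).log ht.ne'
  have hlog₂ : HasDerivAt (fun t => log (1 - (1 + t) * q)) (-q / (1 - (1 + t) * q)) t := by
    simpa using ((((hasDerivAt_id t).const_add 1).mul_const q).const_sub 1).log hqt.ne'
  have hsq : HasDerivAt (fun t => t ^ 2) (2 * t) t := by simpa using hasDerivAt_pow 2 t
  refine ((hsq.add (hlog₁.const_mul q)).add (hlog₂.const_mul (1 - q))).congr_deriv ?_
  generalize hb : 1 - (1 + t) * q = b at hqt ⊢
  field_simp
  linear_combination (-q) * hb

lemma one_sub_one_add_mul_pos {q t : ℝ} (hq : q ≤ 1 / 2) (ht₀ : -1 ≤ t) (ht₁ : t < 1) :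
    0 < 1 - (1 + t) * q := by
  nlinarith

lemma lt_two_mul_one_add_mul_one_sub {q t : ℝ} (hq : q ≤ 1 / 2) (ht : t ^ 2 < 1 / 2) :
    q < 2 * (1 + t) * (1 - (1 + t) * q) := by
  nlinarith [mul_le_mul_of_nonneg_left hq (by positivity : (0 : ℝ) ≤ 2 * (1 + t) ^ 2 + 1)]

lemma klSlack_strictMonoOn {q ε : ℝ} (hq : q ≤ 1 / 2) (hε : ε ^ 2 < 1 / 2) :
    StrictMonoOn (klSlack q) (Icc 0 ε) := by
  have hε₁ : ε < 1 := by nlinarith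
  have hderiv : ∀ t ∈ Icc 0 ε, HasDerivAt (klSlack q)
      (t * (2 * (1 + t) * (1 - (1 + t) * q) - q) / ((1 + t) * (1 - (1 + t) * q))) t :=
    fun t ⟨ht₀, htε⟩ ↦
      hasDerivAt_klSlack (by linarith) (one_sub_one_add_mul_pos hq (by linarith) (by linarith))
  refine strictMonoOn_of_hasDerivWithinAt_pos (convex_Icc 0 ε)
    (fun t ht ↦ (hderiv t ht).continuousAt.continuousWithinAt)
    (fun t ht ↦ (hderiv t (interior_subset ht)).hasDerivWithinAt) ?_
  intro t ht
  rw [interior_Icc] at ht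
  obtain ⟨ht₀, htε⟩ := ht
  have ht : t ^ 2 < 1 / 2 := by nlinarith
  have hqt := one_sub_one_add_mul_pos hq (by linarith) (by linarith)
  have hfactor := sub_pos.2 (lt_two_mul_one_add_mul_one_sub hq ht)
  have ht₁ : 0 < 1 + t := by linarith
  positivity

theorem kl_bernoulli_mul_case_general (ε q : ℝ) (hε : 0 < ε) (hε' : ε < Real.sqrt 2 / 2)
    (hq' : q ≤ 1 / 2) :
    -q * Real.log (1 + ε) + (1 - q) * Real.log (1 - q) -
      (1 - q) * Real.log (1 - (1 + ε) * q) < ε ^ 2 := by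
  have hε₂ : ε ^ 2 < 1 / 2 := by
    calc ε ^ 2 < (√2 / 2) ^ 2 := pow_lt_pow_left₀ hε' hε.le two_ne_zero
      _ = 1 / 2 := by rw [div_pow, sq_sqrt zero_le_two]; norm_num
  have hmono := klSlack_strictMonoOn hq' hε₂ (left_mem_Icc.2 hε.le) (right_mem_Icc.2 hε.le) hε
  rw [klSlack_zero] at hmono
  unfold klSlack at hmono
  linarith

/-- KL divergence between `Bernoulli(q)` and `Bernoulli((1+ε)·q)` is less than `ε²`
whenever `0 < q ≤ 1/2` and `0 < ε < √2/2`. -/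
theorem kl_bernoulli_mul_case (ε q : ℝ) (hε : 0 < ε) (hε' : ε < Real.sqrt 2 / 2)
    (hq : 0 < q) (hq' : q ≤ 1 / 2) :
    -q * Real.log (1 + ε) + (1 - q) * Real.log (1 - q) -
      (1 - q) * Real.log (1 - (1 + ε) * q) < ε ^ 2 :=
  kl_bernoulli_mul_case_general ε q hε hε' hq'
end
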